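/- arXiv:2405.09311 — 2 statements merged into one kernel-verified Lean document; each statement's English description precedes it below -/
import Mathlib

section
/- Let G be an additive abelian group and let f : G → ℂ be a partial character. Then for every finite subset Y of G and every function a : Y → ℂ, one has |Σ_{φ ∈ Y} a(φ)·f(φ)|² ≤ Re( Σ_{φ ∈ Y} Σ_{φ' ∈ Y} a(φ)·conj(a(φ'))·f(φ − φ') ). -/
/-- A partial character on an additive abelian group `G`: every value is `0` or of
modulus `1`, and whenever `f g ≠ 0`, `f (g + h) = f g * f h` for all `h`. -/
def IsPartialChar {G : Type*} [AddCommGroup G] (f : G → ℂ) : Prop :=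
  (∀ g, f g = 0 ∨ ‖f g‖ = 1) ∧
  (∀ g, f g ≠ 0 → ∀ h, f (g + h) = f g * f h)

/-- For a partial character `f` on an abelian group `G`, a finite subset `Y ⊆ G` and
`a : Y → ℂ`, one has `|∑_{φ ∈ Y} a(φ) f(φ)|² ≤ Re ∑_{φ, φ' ∈ Y} a(φ) conj(a(φ')) f(φ - φ')`. -/
theorem partialChar_positivity {G : Type*} [AddCommGroup G] (f : G → ℂ)
    (hf : IsPartialChar f) (Y : Finset G) (a : G → ℂ) :
    ‖∑ φ ∈ Y, a φ * f φ‖ ^ 2 ≤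
      (∑ φ ∈ Y, ∑ φ' ∈ Y, a φ * (starRingEnd ℂ) (a φ') * f (φ - φ')).re := by
  obtain ⟨habs, hmul⟩ := hf
  by_cases hall : ∀ g, f g = 0
  · simp [hall]
  push_neg at hall
  obtain ⟨g0, hg0⟩ := hall
  have h0 : f 0 = 1 := by
    have h := hmul g0 hg0 0
    rw [add_zero] at h
    have h' : f g0 * f 0 = f g0 * 1 := by rw [← h, mul_one]
    exact mul_left_cancel₀ hg0 h'
  have hconj : ∀ g, f g ≠ 0 → f (-g) = (starRingEnd ℂ) (f g) := by
    intro g hg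
    have h1 : f (-g) * f g = 1 := by
      rw [mul_comm, ← hmul g hg (-g), add_neg_cancel, h0]
    have ha : ‖f g‖ = 1 := (habs g).resolve_left hg
    rw [eq_inv_of_mul_eq_one_left h1, Complex.inv_def, Complex.normSq_eq_norm_sq, ha]
    norm_num
  have hne : ∀ g, f g ≠ 0 → f (-g) ≠ 0 := by
    intro g hg
    rw [hconj g hg]
    simpa using hg
  classical
  let s : Setoid G :=
    { r := fun x y => f (x - y) ≠ 0
      iseqv := by
        constructor
        · intro x; rw [sub_self, h0]; exact one_ne_zero
        · intro x y h
          have := hne _ h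
          rwa [neg_sub] at this
        · intro x y z hxy hyz
          have e : x - y + (y - z) = x - z := by abel
          have : f (x - z) = f (x - y) * f (y - z) := by
            rw [← e, hmul _ hxy]
          rw [this]; exact mul_ne_zero hxy hyz }
  have hsub : ∀ x y g : G, f (x - g) ≠ 0 → f (y - g) ≠ 0 →
      f (x - y) = f (x - g) * (starRingEnd ℂ) (f (y - g)) := by
    intro x y g hx hy
    rw [← hconj _ hy, ← hmul _ hx]
    congr 1
    abel
  set q : G → Quotient s := Quotient.mk s with hq
  have hqiff : ∀ x y : G, q x = q y ↔ f (x - y) ≠ 0 := by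
    intro x y
    exact ⟨fun h => Quotient.exact h, fun h => Quotient.sound h⟩
  set F : Quotient s → Finset G := fun c => Y.filter (fun x => q x = c) with hF
  set S : Quotient s → ℂ := fun c => ∑ φ ∈ F c, a φ * f (φ - c.out) with hS
  have hmemF : ∀ (c : Quotient s) (x : G), x ∈ F c → f (x - c.out) ≠ 0 := by
    intro c x hx
    rw [hF] at hx
    have hqx : q x = c := (Finset.mem_filter.mp hx).2
    have : q x = q c.out := by rw [hqx, hq]; exact (Quotient.out_eq c).symm
    exact (hqiff x c.out).mp this
  -- RHS computation
  have key : (∑ φ ∈ Y, ∑ φ' ∈ Y, a φ * (starRingEnd ℂ) (a φ') * f (φ - φ')) =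
      ∑ c ∈ Y.image q, S c * (starRingEnd ℂ) (S c) := by
    rw [← Finset.sum_fiberwise_of_maps_to (g := q)
      (fun x hx => Finset.mem_image_of_mem _ hx)]
    refine Finset.sum_congr rfl fun c hc => ?_
    have step2 : ∀ φ ∈ F c, (∑ φ' ∈ Y, a φ * (starRingEnd ℂ) (a φ') * f (φ - φ')) =
        ∑ φ' ∈ F c, a φ * (starRingEnd ℂ) (a φ') * f (φ - φ') := by
      intro φ hφ
      have hqφ : q φ = c := (Finset.mem_filter.mp hφ).2
      rw [hF]
      rw [Finset.sum_filter_of_ne]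
      intro x hx hne0
      have hfne : f (φ - x) ≠ 0 := fun h => hne0 (by rw [h, mul_zero])
      rw [← hqφ]
      exact ((hqiff φ x).mpr hfne).symm
    rw [Finset.sum_congr rfl step2]
    have step3 : ∀ φ ∈ F c, ∀ φ' ∈ F c,
        a φ * (starRingEnd ℂ) (a φ') * f (φ - φ')
          = (a φ * f (φ - c.out)) * (starRingEnd ℂ) (a φ' * f (φ' - c.out))
        := by
      intro φ hφ φ' hφ'
      rw [hsub φ φ' c.out (hmemF c φ hφ) (hmemF c φ' hφ'), map_mul]
      ring
    rw [Finset.sum_congr rfl (fun φ hφ => Finset.sum_congr rfl (step3 φ hφ)),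
      ← Finset.sum_mul_sum, hS, ← map_sum]
  rw [key, Complex.re_sum]
  have hre : ∀ c : Quotient s, (S c * (starRingEnd ℂ) (S c)).re = Complex.normSq (S c) := by
    intro c
    rw [Complex.mul_conj]
    simp
  rw [Finset.sum_congr rfl fun c _ => hre c]
  -- LHS computation
  set c0 : Quotient s := q 0 with hc0
  have hYF : (∑ φ ∈ Y, a φ * f φ) = ∑ φ ∈ F c0, a φ * f φ := by
    rw [hF, Finset.sum_filter_of_ne]
    intro x hx hne0
    have hfx : f x ≠ 0 := fun h => hne0 (by rw [h, mul_zero])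
    rw [hc0]
    refine ((hqiff x 0).mpr ?_)
    rwa [sub_zero]
  rw [Complex.sq_norm, hYF]
  by_cases hc0mem : c0 ∈ Y.image q
  · have hgne : f c0.out ≠ 0 := by
      have : q c0.out = q 0 := by rw [hq, Quotient.out_eq, hc0]
      have := (hqiff c0.out 0).mp this
      rwa [sub_zero] at this
    have hSc0 : S c0 = (∑ φ ∈ F c0, a φ * f φ) * (starRingEnd ℂ) (f c0.out) := by
      rw [hS, Finset.sum_mul]
      refine Finset.sum_congr rfl fun φ hφ => ?_
      have hφne : f (φ - c0.out) ≠ 0 := hmemF c0 φ hφ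
      have hfφ : f φ ≠ 0 := by
        intro h
        have hq0 : q φ = c0 := (Finset.mem_filter.mp hφ).2
        have := (hqiff φ 0).mp (by rw [hq0, hc0])
        rw [sub_zero] at this
        exact this h
      have : f (φ - c0.out) = f (φ - 0) * (starRingEnd ℂ) (f (c0.out - 0)) := by
        refine hsub φ c0.out 0 ?_ ?_ <;> rwa [sub_zero]
      rw [this, sub_zero, sub_zero]
      ring
    have habsg : ‖f c0.out‖ = 1 := (habs c0.out).resolve_left hgne
    have hnsq : Complex.normSq (f c0.out) = 1 := by
      rw [Complex.normSq_eq_norm_sq, habsg]; norm_num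
    have hvals : Complex.normSq (∑ φ ∈ F c0, a φ * f φ) = Complex.normSq (S c0) := by
      rw [hSc0, Complex.normSq_mul, Complex.normSq_conj, hnsq, mul_one]
    rw [hvals]
    exact Finset.single_le_sum (fun c _ => Complex.normSq_nonneg (S c)) hc0mem
  · have hFempty : F c0 = ∅ := by
      rw [hF]
      refine Finset.filter_eq_empty_iff.mpr fun x hx hqx => ?_
      exact hc0mem (hqx ▸ Finset.mem_image_of_mem q hx)
    rw [hFempty]
    simp only [Finset.sum_empty, map_zero]
    exact Finset.sum_nonneg fun c _ => Complex.normSq_nonneg (S c)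
end

section
/- There is an absolute constant C > 0 such that for all real numbers H ≥ 1 and B ≥ 1, the number of positive integers n ≤ H satisfying n ≥ B · rad(n) is at most C · H · B^{−1/2}. -/
/-- The radical of a positive integer: the product of its distinct prime factors. -/
def rad (n : ℕ) : ℕ := ∏ p ∈ n.primeFactors, p

lemma rad_pos (n : ℕ) : 0 < rad n :=
  Finset.prod_pos fun p hp => (Nat.prime_of_mem_primeFactors hp).pos

lemma decomp (n : ℕ) : ∃ p : ℕ × ℕ, p.2 ^ 2 * p.1 = n ∧ Squarefree p.1 := by
  obtain ⟨a, b, h1, h2⟩ := Nat.sq_mul_squarefree n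
  exact ⟨(a, b), h1, h2⟩

noncomputable def dec (n : ℕ) : ℕ × ℕ := Classical.choose (decomp n)

lemma dec_spec (n : ℕ) : (dec n).2 ^ 2 * (dec n).1 = n ∧ Squarefree (dec n).1 :=
  Classical.choose_spec (decomp n)

/-- There is an absolute constant `C > 0` such that for all `H, B ≥ 1`, the number of
positive integers `n ≤ H` with `n ≥ B · rad(n)` is at most `C · H · B^{-1/2}`. -/
theorem count_large_squarefull_part :
    ∃ C : ℝ, 0 < C ∧ ∀ H B : ℝ, 1 ≤ H → 1 ≤ B →
      (Nat.card {n : ℕ // 0 < n ∧ (n : ℝ) ≤ H ∧ B * (rad n : ℝ) ≤ (n : ℝ)} : ℝ)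
        ≤ C * H * B ^ (-(1/2 : ℝ)) := by
  refine ⟨2, by norm_num, fun H B hH hB => ?_⟩
  have hB0 : (0:ℝ) < B := lt_of_lt_of_le one_pos hB
  have hH0 : (0:ℝ) < H := lt_of_lt_of_le one_pos hH
  set m : ℕ := ⌈Real.sqrt B⌉₊ with hm
  have hsB : (1:ℝ) ≤ Real.sqrt B := by
    rw [show (1:ℝ) = Real.sqrt 1 by simp]
    exact Real.sqrt_le_sqrt hB
  have hm1 : 1 ≤ m := by
    rw [hm, Nat.one_le_ceil_iff]
    linarith
  set M : ℕ := ⌊H⌋₊ with hM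
  -- the target finset
  set T : Finset (ℕ × ℕ) :=
    (Finset.Icc m M).biUnion (fun b => Finset.Icc 1 ⌊H / (b:ℝ)^2⌋₊ ×ˢ ({b} : Finset ℕ))
    with hT
  -- the injection
  have key : ∀ n : ℕ, 0 < n → (n : ℝ) ≤ H → B * (rad n : ℝ) ≤ (n : ℝ) → (dec n) ∈ T := by
    intro n hn hnH hrad
    obtain ⟨hd, hsq⟩ := dec_spec n
    set a := (dec n).1
    set b := (dec n).2
    have ha0 : 0 < a := by
      rcases Nat.eq_zero_or_pos a with h | h
      · simp [h] at hd; omega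
      · exact h
    have hb0 : 0 < b := by
      rcases Nat.eq_zero_or_pos b with h | h
      · simp [h] at hd; omega
      · exact h
    -- a ≤ rad n
    have hdvd : a ∣ rad n := by
      have h1 : a.primeFactors ⊆ n.primeFactors :=
        Nat.primeFactors_mono ⟨b ^ 2, by rw [← hd]; ring⟩ (by omega)
      calc a = ∏ p ∈ a.primeFactors, p := (Nat.prod_primeFactors_of_squarefree hsq).symm
        _ ∣ ∏ p ∈ n.primeFactors, p := Finset.prod_dvd_prod_of_subset _ _ _ h1
    have haler : (a : ℝ) ≤ (rad n : ℝ) := by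
      exact_mod_cast Nat.le_of_dvd (rad_pos n) hdvd
    -- B ≤ b^2
    have hBb : B ≤ (b : ℝ)^2 := by
      have h1 : B * a ≤ (n : ℝ) := le_trans (by nlinarith) hrad
      have h2 : (n : ℝ) = (b:ℝ)^2 * a := by
        rw [← hd]; push_cast; ring
      have ha0' : (0:ℝ) < a := by exact_mod_cast ha0
      nlinarith
    have hbm : m ≤ b := by
      rw [hm, Nat.ceil_le]
      calc Real.sqrt B ≤ Real.sqrt ((b:ℝ)^2) := Real.sqrt_le_sqrt hBb
        _ = b := by rw [Real.sqrt_sq (by positivity)]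
    have hbM : b ≤ M := by
      rw [hM, Nat.le_floor_iff hH0.le]
      have : (b:ℝ)^2 ≤ n := by
        rw [← hd]; push_cast; nlinarith [show (1:ℝ) ≤ (a:ℝ) by exact_mod_cast ha0]
      have hb1 : (1:ℝ) ≤ b := by exact_mod_cast hb0
      nlinarith
    have haH : (a : ℝ) ≤ H / (b:ℝ)^2 := by
      rw [le_div_iff₀ (by positivity)]
      calc (a:ℝ) * (b:ℝ)^2 = ((b ^ 2 * a : ℕ) : ℝ) := by push_cast; ring
        _ = (n : ℝ) := by rw [hd]
        _ ≤ H := hnH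
    rw [hT, Finset.mem_biUnion]
    exact ⟨b, Finset.mem_Icc.2 ⟨hbm, hbM⟩, Finset.mem_product.2
      ⟨Finset.mem_Icc.2 ⟨ha0, Nat.le_floor haH⟩, Finset.mem_singleton_self b⟩⟩
  -- card bound via injection
  have hcard : Nat.card {n : ℕ // 0 < n ∧ (n : ℝ) ≤ H ∧ B * (rad n : ℝ) ≤ (n : ℝ)} ≤ T.card := by
    rw [← Nat.card_eq_finsetCard]
    apply Nat.card_le_card_of_injective
      (f := fun x => (⟨dec x.1, key x.1 x.2.1 x.2.2.1 x.2.2.2⟩ : T))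
    intro x y hxy
    have h1 : dec x.1 = dec y.1 := congrArg Subtype.val hxy
    have hx := (dec_spec x.1).1
    have hy := (dec_spec y.1).1
    exact Subtype.ext (by rw [← hx, ← hy, h1])
  -- bound card T
  have hTcard : (T.card : ℝ) ≤ 2 * H / m := by
    have h1 : T.card ≤ ∑ b ∈ Finset.Icc m M, ⌊H / (b:ℝ)^2⌋₊ := by
      refine (Finset.card_biUnion_le).trans ?_
      apply Finset.sum_le_sum
      intro b _
      simp [Finset.card_product]
    have h2 : ((∑ b ∈ Finset.Icc m M, ⌊H / (b:ℝ)^2⌋₊ : ℕ) : ℝ)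
        ≤ ∑ b ∈ Finset.Icc m M, H / (b:ℝ)^2 := by
      push_cast
      apply Finset.sum_le_sum
      intro b hb
      have hb1 : 1 ≤ b := le_trans hm1 (Finset.mem_Icc.1 hb).1
      exact Nat.floor_le (by positivity)
    have h3 : ∑ b ∈ Finset.Icc m M, H / (b:ℝ)^2 = H * ∑ b ∈ Finset.Icc m M, ((b:ℝ)^2)⁻¹ := by
      rw [Finset.mul_sum]
      apply Finset.sum_congr rfl
      intro b _
      rw [div_eq_mul_inv]
    have h4 : ∑ b ∈ Finset.Icc m M, ((b:ℝ)^2)⁻¹ ≤ 2 / m := by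
      have hsub : Finset.Icc m M ⊆ Finset.Ioo (m - 1) (M + 1) := by
        intro b hb
        rw [Finset.mem_Ioo]
        rw [Finset.mem_Icc] at hb
        omega
      calc ∑ b ∈ Finset.Icc m M, ((b:ℝ)^2)⁻¹
          ≤ ∑ b ∈ Finset.Ioo (m-1) (M+1), ((b:ℝ)^2)⁻¹ := by
            apply Finset.sum_le_sum_of_subset_of_nonneg hsub
            intro b _ _; positivity
        _ ≤ 2 / ((m:ℕ) - 1 + 1 : ℕ) := by
            have := sum_Ioo_inv_sq_le (α := ℝ) (m-1) (M+1)
            push_cast at this ⊢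
            convert this using 2
        _ = 2 / m := by congr 1; exact_mod_cast congrArg Nat.cast (Nat.sub_add_cancel hm1)
      done
    calc (T.card : ℝ) ≤ ((∑ b ∈ Finset.Icc m M, ⌊H / (b:ℝ)^2⌋₊ : ℕ) : ℝ) := by exact_mod_cast h1
      _ ≤ H * ∑ b ∈ Finset.Icc m M, ((b:ℝ)^2)⁻¹ := by rw [← h3]; exact h2
      _ ≤ H * (2 / m) := by
          apply mul_le_mul_of_nonneg_left h4 hH0.le
      _ = 2 * H / m := by ring
  -- finish
  have hmB : Real.sqrt B ≤ m := Nat.le_ceil _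
  have hrpow : B ^ (-(1/2 : ℝ)) = (Real.sqrt B)⁻¹ := by
    rw [Real.rpow_neg hB0.le, Real.sqrt_eq_rpow]
  have hm0 : (0:ℝ) < m := by exact_mod_cast hm1
  have hsB0 : (0:ℝ) < Real.sqrt B := Real.sqrt_pos.2 hB0
  calc (Nat.card {n : ℕ // 0 < n ∧ (n : ℝ) ≤ H ∧ B * (rad n : ℝ) ≤ (n : ℝ)} : ℝ)
      ≤ (T.card : ℝ) := by exact_mod_cast hcard
    _ ≤ 2 * H / m := hTcard
    _ ≤ 2 * H / Real.sqrt B := by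
        apply div_le_div_of_nonneg_left (by positivity) hsB0 hmB
    _ = 2 * H * B ^ (-(1/2 : ℝ)) := by rw [hrpow]; ring
end
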